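/- Neither of the equations 5x² + 6y² = z² nor 5x² − 6y² = z² has a solution in rational numbers with (x, y, z) ≠ (0, 0, 0). -/

import Mathlib

/-!
Clearing denominators reduces both equations to an integer solution of `5x² + 6εy² = z²`
with `ε = ±1`. Modulo 3 this reads `2x² ≡ z²`, and 2 is not a square mod 3, so `3 ∣ x` and
`3 ∣ z`; then `9 ∣ 6εy²` forces `3 ∣ y`. Dividing by 3 gives a new solution, so every power of 3
divides `x`, `y` and `z`, which therefore vanish.
-/

lemma Int.eq_zero_of_forall_pow_dvd {p a : ℤ} (hp : p.natAbs ≠ 1) (h : ∀ n : ℕ, p ^ n ∣ a) :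
    a = 0 := by
  by_contra ha
  obtain ⟨n, hn⟩ := Int.finiteMultiplicity_iff.2 ⟨hp, ha⟩
  exact hn (h (n + 1))

lemma Int.eq_zero_of_descent {P : ℤ → ℤ → ℤ → Prop} {p : ℤ} (hp : p.natAbs ≠ 1)
    (hdvd : ∀ x y z, P x y z → p ∣ x ∧ p ∣ y ∧ p ∣ z)
    (hdescent : ∀ x y z, P (p * x) (p * y) (p * z) → P x y z)
    {x y z : ℤ} (h : P x y z) : x = 0 ∧ y = 0 ∧ z = 0 := by
  have pow_dvd : ∀ n : ℕ, ∀ x y z, P x y z → p ^ n ∣ x ∧ p ^ n ∣ y ∧ p ^ n ∣ z := by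
    intro n
    induction n with
    | zero => simp
    | succ n ih =>
      intro x y z h
      obtain ⟨⟨a, rfl⟩, ⟨b, rfl⟩, ⟨c, rfl⟩⟩ := hdvd x y z h
      obtain ⟨ha, hb, hc⟩ := ih a b c (hdescent a b c h)
      rw [pow_succ']
      exact ⟨mul_dvd_mul_left p ha, mul_dvd_mul_left p hb, mul_dvd_mul_left p hc⟩
  exact ⟨Int.eq_zero_of_forall_pow_dvd hp fun n => (pow_dvd n x y z h).1,
    Int.eq_zero_of_forall_pow_dvd hp fun n => (pow_dvd n x y z h).2.1,
    Int.eq_zero_of_forall_pow_dvd hp fun n => (pow_dvd n x y z h).2.2⟩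

lemma ZMod.eq_zero_of_five_mul_sq_eq_sq : ∀ a c : ZMod 3, 5 * a ^ 2 = c ^ 2 → a = 0 ∧ c = 0 := by
  decide

section

variable {ε x y z : ℤ}

lemma three_dvd_of_five_mul_sq_add_six_mul_sq (hε : ¬ 3 ∣ ε)
    (h : 5 * x ^ 2 + 6 * ε * y ^ 2 = z ^ 2) : 3 ∣ x ∧ 3 ∣ y ∧ 3 ∣ z := by
  have h3 : 5 * (x : ZMod 3) ^ 2 = (z : ZMod 3) ^ 2 := by
    have := congrArg (Int.cast : ℤ → ZMod 3) h
    push_cast at this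
    rwa [show (6 : ZMod 3) = 0 by decide, zero_mul, zero_mul, add_zero] at this
  obtain ⟨hx, hz⟩ := ZMod.eq_zero_of_five_mul_sq_eq_sq _ _ h3
  obtain ⟨a, rfl⟩ := (ZMod.intCast_zmod_eq_zero_iff_dvd x 3).mp hx
  obtain ⟨c, rfl⟩ := (ZMod.intCast_zmod_eq_zero_iff_dvd z 3).mp hz
  have hy : 3 ∣ 2 * ε * y ^ 2 :=
    ⟨c ^ 2 - 5 * a ^ 2, mul_left_cancel₀ three_ne_zero (by linear_combination h)⟩
  refine ⟨dvd_mul_right 3 a, ?_, dvd_mul_right 3 c⟩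
  rcases Int.prime_three.dvd_or_dvd hy with h2ε | hy2
  · rcases Int.prime_three.dvd_or_dvd h2ε with h2 | h
    · exact absurd h2 (by decide)
    · exact absurd h hε
  · exact Int.prime_three.dvd_of_dvd_pow hy2

lemma five_mul_sq_add_six_mul_sq_of_mul_three
    (h : 5 * (3 * x) ^ 2 + 6 * ε * (3 * y) ^ 2 = (3 * z) ^ 2) :
    5 * x ^ 2 + 6 * ε * y ^ 2 = z ^ 2 :=
  mul_left_cancel₀ (by norm_num : (9 : ℤ) ≠ 0) (by linear_combination h)

lemma Int.eq_zero_of_five_mul_sq_add_six_mul_sq (hε : ¬ 3 ∣ ε)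
    (h : 5 * x ^ 2 + 6 * ε * y ^ 2 = z ^ 2) : x = 0 ∧ y = 0 ∧ z = 0 :=
  Int.eq_zero_of_descent (P := fun x y z => 5 * x ^ 2 + 6 * ε * y ^ 2 = z ^ 2) (by decide)
    (fun _ _ _ => three_dvd_of_five_mul_sq_add_six_mul_sq hε)
    (fun _ _ _ => five_mul_sq_add_six_mul_sq_of_mul_three) h

end

lemma Rat.exists_common_denominator (x y z : ℚ) :
    ∃ d : ℤ, d ≠ 0 ∧ ∃ X Y Z : ℤ, x * d = X ∧ y * d = Y ∧ z * d = Z := by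
  refine ⟨x.den * y.den * z.den, by positivity, x.num * y.den * z.den, y.num * x.den * z.den,
    z.num * x.den * y.den, ?_, ?_, ?_⟩ <;>
  · push_cast
    rw [← Rat.mul_den_eq_num]
    ring

lemma Rat.eq_zero_of_five_mul_sq_add_six_mul_sq {ε : ℤ} (hε : ¬ 3 ∣ ε) {x y z : ℚ}
    (h : 5 * x ^ 2 + 6 * ε * y ^ 2 = z ^ 2) : x = 0 ∧ y = 0 ∧ z = 0 := by
  obtain ⟨d, hd, X, Y, Z, hX, hY, hZ⟩ := Rat.exists_common_denominator x y z
  have hint : 5 * X ^ 2 + 6 * ε * Y ^ 2 = Z ^ 2 := by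
    have : ((5 * X ^ 2 + 6 * ε * Y ^ 2 : ℤ) : ℚ) = ((Z ^ 2 : ℤ) : ℚ) := by
      push_cast [← hX, ← hY, ← hZ]
      linear_combination (d : ℚ) ^ 2 * h
    exact_mod_cast this
  obtain ⟨rfl, rfl, rfl⟩ := Int.eq_zero_of_five_mul_sq_add_six_mul_sq hε hint
  simp_all

theorem no_rational_solutions (x y z : ℚ)
    (h : 5 * x ^ 2 + 6 * y ^ 2 = z ^ 2 ∨ 5 * x ^ 2 - 6 * y ^ 2 = z ^ 2) :
    x = 0 ∧ y = 0 ∧ z = 0 := by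
  rcases h with h | h
  · exact Rat.eq_zero_of_five_mul_sq_add_six_mul_sq (ε := 1) (by decide) (by simpa using h)
  · exact Rat.eq_zero_of_five_mul_sq_add_six_mul_sq (ε := -1) (by decide)
      (by push_cast; linear_combination h)
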